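/- SCC characterization for initialized formulas: let L be an LTS, ψ ∈ L⁺(F_p^∞) a conjunction-free formula in canonical form, and k ≥ |S| + 1. Then there exists a run ρ of L with (ρ,k) ⊭ F ψ if and only if there exist a strongly connected component C of L and a ψ-avoiding sequence U that is realized by a run all of whose states lie in C. -/

import Mathlib

/-!
A run on which `F ψ` fails eventually stays in the SCC of the states it visits infinitely
often. There `ψ` fails on every window of `k + 1 > |S|` positions; such a window repeats a
state, which yields a loop avoiding the root label, and at the start of that loop every
child `F_p^∞ ψᵢ` fails, so `ψᵢ` fails on a whole later window and the argument recurses.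
Merging by position the loops found for the subtrees gives a linear extension of `T(ψ)`
realized by the run.

Conversely, the loops of a realized avoiding sequence lie in one SCC, so a single closed
walk through it contains, for each loop, `k + 1` consecutive states of that loop. Repeating
this walk forever gives a run on which, for every node label, windows of length `k + 1`
avoiding it recur. Bottom-up, every subtree then fails on recurring windows, so no
`F_p^∞ ψᵢ` ever holds, and the root label `false` never holds either.
-/

open scoped Classical
open MeasureTheory

/-- A labelled transition system: a finite set of states `S`, an initial state,
a transition relation in which every state has at least one successor, and a
labeling of states by sets of atomic propositions. -/
structure LTS (S AP : Type) where
  init : S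
  T : S → S → Prop
  lbl : S → Set AP
  succ_nonempty : ∀ s : S, ∃ t : S, T s t

variable {S AP : Type}

/-- A run of an LTS: an infinite sequence of states following the transitions. -/
def IsRun (L : LTS S AP) (ρ : ℕ → S) : Prop := ∀ i : ℕ, L.T (ρ i) (ρ (i + 1))

/-- The shifted run `ρ[i..]`. -/
def shift (ρ : ℕ → S) (i : ℕ) : ℕ → S := fun n => ρ (n + i)

/-- A state formula: a (possibly empty, i.e. `false`) disjunction of literals,
each literal being a polarity (`true` = positive) paired with an atomic proposition. -/
abbrev StateFormula (AP : Type) := List (Bool × AP)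

/-- A state `s` satisfies a state formula `θ`. -/
def SatState (L : LTS S AP) (θ : StateFormula AP) (s : S) : Prop :=
  ∃ p ∈ θ, if p.1 then p.2 ∈ L.lbl s else p.2 ∉ L.lbl s

/-- A conjunction-free formula in canonical form `ψ = θ ∨ ⋁ F_p^∞ ψᵢ`, identified
with its tree `T(ψ)`: a root labeled by the state formula `θ` whose children are
the trees of the `ψᵢ`. -/
inductive CTree (AP : Type) : Type where
  | node : StateFormula AP → List (CTree AP) → CTree AP

/-- Satisfaction `(ρ, k) ⊨ ψ` for a canonical conjunction-free formula
`ψ = θ ∨ ⋁ F_p^∞ ψᵢ`. -/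
def SatC (L : LTS S AP) : CTree AP → (ℕ → S) → ℕ → Prop
  | .node θ cs, ρ, k =>
      SatState L θ (ρ 0) ∨
      ∃ c ∈ cs.attach, ∀ i : ℕ, ∃ j ≤ k, SatC L c.1 (shift ρ (i + j)) k
termination_by t => sizeOf t
decreasing_by
  have := List.sizeOf_lt_of_mem c.2
  simp only [CTree.node.sizeOf_spec]
  omega

/-- Satisfaction `(ρ, k) ⊨ F_p^∞ ψ` for a canonical conjunction-free formula `ψ`. -/
def SatFinfC (L : LTS S AP) (t : CTree AP) (ρ : ℕ → S) (k : ℕ) : Prop :=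
  ∀ i : ℕ, ∃ j ≤ k, SatC L t (shift ρ (i + j)) k

/-- `Interleave l₁ l₂ l`: `l` is an interleaving (shuffle) of `l₁` and `l₂`. -/
inductive Interleave {α : Type} : List α → List α → List α → Prop where
  | nil : Interleave [] [] []
  | left {a : α} {l₁ l₂ l : List α} : Interleave l₁ l₂ l → Interleave (a :: l₁) l₂ (a :: l)
  | right {a : α} {l₁ l₂ l : List α} : Interleave l₁ l₂ l → Interleave l₁ (a :: l₂) (a :: l)

mutual
/-- `LinExt t l`: the list `l` of state-formula labels enumerates the nodes of the
tree `t` in a linear order extending the ancestor order of the tree (the root comes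
first, followed by an interleaving of linear extensions of the children's subtrees). -/
inductive LinExt {AP : Type} : CTree AP → List (StateFormula AP) → Prop where
  | node {θ : StateFormula AP} {cs : List (CTree AP)} {l : List (StateFormula AP)} :
      LinExtF cs l → LinExt (.node θ cs) (θ :: l)

/-- Linear extensions of a forest: interleavings of linear extensions of its trees. -/
inductive LinExtF {AP : Type} : List (CTree AP) → List (StateFormula AP) → Prop where
  | nil : LinExtF [] []
  | cons {t : CTree AP} {ts : List (CTree AP)} {l₁ l₂ l : List (StateFormula AP)} :
      LinExt t l₁ → LinExtF ts l₂ → Interleave l₁ l₂ l → LinExtF (t :: ts) l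
end

/-- A (nonempty) finite path of the LTS. -/
def IsPath (L : LTS S AP) (u : List S) : Prop := u ≠ [] ∧ u.Chain' L.T

/-- A loop: a finite path with at least one transition whose first and last states coincide. -/
def IsLoop (L : LTS S AP) (u : List S) : Prop :=
  2 ≤ u.length ∧ u.Chain' L.T ∧ u.head? = u.getLast?

/-- The set `occ u` of states occurring in a finite sequence. -/
def occ (u : List S) : Set S := {s | s ∈ u}

/-- A `ψ`-avoiding sequence: a linear ordering of the nodes of `T(ψ)` extending the
ancestor order together with, for each node labeled by a state formula `θ`, a loop
whose set of states is a `θ`-avoiding cycle. -/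
structure AvoidingSeq (L : LTS S AP) (ψ : CTree AP) where
  labels : List (StateFormula AP)
  loops : List (List S)
  linext : LinExt ψ labels
  length_eq : loops.length = labels.length
  isLoop : ∀ u ∈ loops, IsLoop L u
  avoid : ∀ p ∈ loops.zip labels, ∀ s ∈ p.1, ¬ SatState L p.2 s

/-- A run `ρ` realizes an avoiding sequence `U = u₀, …, u_l`: there are positions
`j₀ ≤ j₁ ≤ … ≤ j_l` with `ρ (jᵢ) ∈ occ uᵢ` for every `i`. -/
def RealizedBy {L : LTS S AP} {ψ : CTree AP} (U : AvoidingSeq L ψ) (ρ : ℕ → S) : Prop :=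
  ∃ j : ℕ → ℕ, Monotone j ∧ ∀ i : Fin U.loops.length, ρ (j i) ∈ occ (U.loops.get i)

/-- Reachability along transitions. -/
def Reachable (L : LTS S AP) : S → S → Prop := Relation.ReflTransGen L.T

/-- A strongly connected component: an equivalence class of mutual reachability. -/
def IsSCC (L : LTS S AP) (C : Set S) : Prop :=
  ∃ s : S, C = {t : S | Reachable L s t ∧ Reachable L t s}

/-- A bottom strongly connected component: an SCC closed under transitions. -/
def IsBSCC (L : LTS S AP) (C : Set S) : Prop :=
  IsSCC L C ∧ ∀ s ∈ C, ∀ t : S, L.T s t → t ∈ C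

open Filter
section Basics
variable {α : Type}

theorem Interleave.nil_left (l : List α) : Interleave [] l l := by
  induction l with
  | nil => exact .nil
  | cons _ _ ih => exact .right ih

theorem Interleave.nil_right (l : List α) : Interleave l [] l := by
  induction l with
  | nil => exact .nil
  | cons _ _ ih => exact .left ih

theorem Interleave.mem_iff {l₁ l₂ l : List α} (h : Interleave l₁ l₂ l) {x : α} :
    x ∈ l ↔ x ∈ l₁ ∨ x ∈ l₂ := by
  induction h with
  | nil => simp
  | left _ ih => simp [ih, or_assoc]
  | right _ ih => simp only [List.mem_cons, ih]; tauto

theorem Interleave.map {β : Type} (f : α → β) {l₁ l₂ l : List α} (h : Interleave l₁ l₂ l) :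
    Interleave (l₁.map f) (l₂.map f) (l.map f) := by
  induction h with
  | nil => exact .nil
  | left _ ih => exact .left ih
  | right _ ih => exact .right ih

theorem interleave_merge (le : α → α → Bool) (l₁ l₂ : List α) :
    Interleave l₁ l₂ (l₁.merge l₂ le) := by
  induction l₁, l₂ using List.merge.induct le with
  | case1 l => simpa using Interleave.nil_left l
  | case2 l _ => simpa using Interleave.nil_right l
  | case3 _ _ _ _ h ih => rw [List.cons_merge_cons_pos _ _ _ h]; exact .left ih
  | case4 _ _ _ _ h ih => rw [List.cons_merge_cons_neg _ _ _ h]; exact .right ih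

theorem exists_mem_zip_of_mem_right {β : Type} {l₁ : List α} {l₂ : List β}
    (hlen : l₁.length = l₂.length) {b : β} (hb : b ∈ l₂) : ∃ a, (a, b) ∈ l₁.zip l₂ := by
  obtain ⟨i, hi, rfl⟩ := List.mem_iff_getElem.1 hb
  have hi' : i < (l₁.zip l₂).length := by simp; omega
  exact ⟨l₁[i], List.getElem_zip (i := i) ▸ List.getElem_mem hi'⟩

theorem exists_monotone_getElem_eq {ps : List ℕ} (h : ps.Pairwise (· ≤ ·)) :
    ∃ j : ℕ → ℕ, Monotone j ∧ ∀ i (hi : i < ps.length), j i = ps[i] := by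
  refine ⟨fun n => if hn : n < ps.length then ps[n] else ps.sum, fun n m hnm => ?_,
    fun i hi => dif_pos hi⟩
  by_cases hm : m < ps.length
  · simp only [dif_pos hm, dif_pos (lt_of_le_of_lt hnm hm)]
    rcases hnm.eq_or_lt with rfl | hlt
    · exact le_rfl
    · exact List.pairwise_iff_getElem.1 h n m _ hm hlt
  · simp only [dif_neg hm]
    split_ifs
    · exact List.le_sum_of_mem (List.getElem_mem _)
    · exact le_rfl

theorem LinExt.ne_nil {t : CTree AP} {l : List (StateFormula AP)} (h : LinExt t l) : l ≠ [] := by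
  cases h; simp

theorem LinExtF.exists_linExt_subset {cs : List (CTree AP)} {l : List (StateFormula AP)}
    (h : LinExtF cs l) {c : CTree AP} (hc : c ∈ cs) : ∃ lc, LinExt c lc ∧ lc ⊆ l := by
  induction cs generalizing l with
  | nil => cases hc
  | cons t ts ih =>
    cases h with
    | cons ht hts hI =>
      rcases List.mem_cons.1 hc with rfl | hc
      · exact ⟨_, ht, fun x hx => hI.mem_iff.2 (.inl hx)⟩
      · obtain ⟨lc, hlc, hsub⟩ := ih hts hc
        exact ⟨lc, hlc, fun x hx => hI.mem_iff.2 (.inr (hsub hx))⟩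

end Basics

section Satisfaction
variable {L : LTS S AP} {ρ : ℕ → S} {k : ℕ}

theorem shift_shift (ρ : ℕ → S) (a b : ℕ) : shift (shift ρ a) b = shift ρ (b + a) := by
  funext n; simp [shift, Nat.add_assoc]

theorem satState_nil (s : S) : ¬ SatState L [] s := by
  simp [SatState]

theorem satC_node_iff {θ : StateFormula AP} {cs : List (CTree AP)} :
    SatC L (.node θ cs) ρ k ↔ SatState L θ (ρ 0) ∨ ∃ c ∈ cs, SatFinfC L c ρ k := by
  rw [SatC]; simp [SatFinfC]

theorem not_satFinfC_iff {t : CTree AP} :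
    ¬ SatFinfC L t ρ k ↔ ∃ i, ∀ j ≤ k, ¬ SatC L t (shift ρ (i + j)) k := by
  simp [SatFinfC]

theorem not_satFinfC_shift_of_frequently {t : CTree AP}
    (h : ∃ᶠ a in atTop, ∀ j ≤ k, ¬ SatC L t (shift ρ (a + j)) k) (i : ℕ) :
    ¬ SatFinfC L t (shift ρ i) k := by
  obtain ⟨a, hia, ha⟩ := Filter.frequently_atTop.1 h i
  refine not_satFinfC_iff.2 ⟨a - i, fun j hj => ?_⟩
  rw [shift_shift, show a - i + j + i = a + j by omega]
  exact ha j hj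

end Satisfaction

section Runs
variable {L : LTS S AP} {ρ : ℕ → S}

theorem IsRun.shift (hρ : IsRun L ρ) (N : ℕ) : IsRun L (shift ρ N) := fun n => by
  simpa [_root_.shift, Nat.add_right_comm] using hρ (n + N)

theorem IsRun.reachable (hρ : IsRun L ρ) {a b : ℕ} (hab : a ≤ b) : Reachable L (ρ a) (ρ b) := by
  induction b, hab using Nat.le_induction with
  | base => exact .refl
  | succ n _ ih => exact ih.tail (hρ n)

theorem eventually_frequently_eq [Finite S] (σ : ℕ → S) :
    ∀ᶠ n in atTop, ∃ᶠ m in atTop, σ m = σ n := by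
  have h : ∀ s : S, ∀ᶠ n in atTop, σ n = s → ∃ᶠ m in atTop, σ m = s := by
    intro s
    by_cases hs : ∃ᶠ m in atTop, σ m = s
    · exact .of_forall fun _ _ => hs
    · exact (not_frequently.1 hs).mono fun _ hn heq => absurd heq hn
  filter_upwards [eventually_all.2 h] with n hn using hn (σ n) rfl

theorem IsRun.exists_tail_mutually_reachable [Finite S] (hρ : IsRun L ρ) :
    ∃ N, ∀ n, Reachable L (ρ N) (ρ (n + N)) ∧ Reachable L (ρ (n + N)) (ρ N) := by
  obtain ⟨N, hN⟩ := eventually_atTop.1 (eventually_frequently_eq ρ)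
  refine ⟨N, fun n => ⟨hρ.reachable (by omega), ?_⟩⟩
  obtain ⟨m, hm, hmN⟩ := frequently_atTop.1 (hN N le_rfl) (n + N)
  exact hmN ▸ hρ.reachable hm

theorem exists_apply_eq_apply_add_of_card_le [Fintype S] (ρ : ℕ → S) {k : ℕ}
    (hk : Fintype.card S ≤ k) (a : ℕ) :
    ∃ m d, a ≤ m ∧ 0 < d ∧ m + d ≤ a + k ∧ ρ m = ρ (m + d) := by
  obtain ⟨x, y, hxy, hρxy⟩ :=
    Fintype.exists_ne_map_eq_of_card_lt (fun i : Fin (k + 1) => ρ (a + i)) (by simp; omega)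
  rcases lt_or_gt_of_ne (Fin.val_ne_of_ne hxy) with h | h
  · exact ⟨a + x, y - x, by omega, by omega, by omega, by
      simpa [show a + x + (y - x) = a + y by omega] using hρxy⟩
  · exact ⟨a + y, x - y, by omega, by omega, by omega, by
      simpa [show a + y + (x - y) = a + x by omega] using hρxy.symm⟩

theorem IsRun.isLoop_map_range' (hρ : IsRun L ρ) {m d : ℕ} (hd : 0 < d)
    (h : ρ m = ρ (m + d)) : IsLoop L ((List.range' m (d + 1)).map ρ) := by
  refine ⟨by simp; omega, ?_, ?_⟩
  · refine (List.isChain_map ρ).2 ((List.isChain_range' m (d + 1) 1).imp ?_)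
    rintro a _ rfl
    exact hρ a
  · simp [List.head?_range', List.getLast?_range', h]

end Runs

structure Witness (S AP : Type) where
  label : StateFormula AP
  loop : List S
  pos : ℕ

section Witnesses
variable {L : LTS S AP} {ρ : ℕ → S} {k a : ℕ}

def Witness.IsFor (L : LTS S AP) (ρ : ℕ → S) (w : Witness S AP) : Prop :=
  IsLoop L w.loop ∧ (∀ x ∈ w.loop, ¬ SatState L w.label x) ∧ ρ w.pos ∈ occ w.loop

def IsWitnessSeq (L : LTS S AP) (ρ : ℕ → S) (a : ℕ) (ws : List (Witness S AP)) : Prop :=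
  (∀ w ∈ ws, w.IsFor L ρ ∧ a ≤ w.pos) ∧ ws.Pairwise (fun w w' => w.pos ≤ w'.pos)

theorem IsWitnessSeq.mono {ws : List (Witness S AP)} {b : ℕ} (h : IsWitnessSeq L ρ a ws)
    (hba : b ≤ a) : IsWitnessSeq L ρ b ws :=
  ⟨fun w hw => ⟨(h.1 w hw).1, hba.trans (h.1 w hw).2⟩, h.2⟩

theorem IsWitnessSeq.cons {w : Witness S AP} {ws : List (Witness S AP)} (hw : w.IsFor L ρ)
    (ha : a ≤ w.pos) (hws : IsWitnessSeq L ρ w.pos ws) : IsWitnessSeq L ρ a (w :: ws) := by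
  refine ⟨?_, List.Pairwise.cons (fun w' hw' => (hws.1 w' hw').2) hws.2⟩
  rintro w' (_ | ⟨_, hw'⟩)
  · exact ⟨hw, ha⟩
  · exact (hws.mono ha).1 w' hw'

theorem IsWitnessSeq.merge {ws₁ ws₂ : List (Witness S AP)} (h₁ : IsWitnessSeq L ρ a ws₁)
    (h₂ : IsWitnessSeq L ρ a ws₂) :
    IsWitnessSeq L ρ a (ws₁.merge ws₂ fun w w' => w.pos ≤ w'.pos) := by
  refine ⟨fun w hw => (List.mem_merge.1 hw).elim (h₁.1 w) (h₂.1 w), ?_⟩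
  have := List.pairwise_merge (le := fun w w' : Witness S AP => decide (w.pos ≤ w'.pos))
    (by simp only [decide_eq_true_eq]; omega)
    (by simp only [Bool.or_eq_true, decide_eq_true_eq]; omega)
    ws₁ ws₂ (by simpa using h₁.2) (by simpa using h₂.2)
  simpa using this

theorem exists_isWitnessSeq_linExtF {cs : List (CTree AP)}
    (h : ∀ c ∈ cs, ∃ ws, LinExt c (ws.map Witness.label) ∧ IsWitnessSeq L ρ a ws) :
    ∃ ws, LinExtF cs (ws.map Witness.label) ∧ IsWitnessSeq L ρ a ws := by
  induction cs with
  | nil => exact ⟨[], .nil, by simp [IsWitnessSeq]⟩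
  | cons c cs ih =>
    obtain ⟨ws₁, hlin₁, hws₁⟩ := h c List.mem_cons_self
    obtain ⟨ws₂, hlin₂, hws₂⟩ := ih fun c' hc' => h c' (List.mem_cons_of_mem _ hc')
    exact ⟨_, .cons hlin₁ hlin₂ ((interleave_merge _ ws₁ ws₂).map _), hws₁.merge hws₂⟩

theorem exists_isWitnessSeq_linExt [Fintype S] (hρ : IsRun L ρ) (hk : Fintype.card S ≤ k) :
    ∀ (t : CTree AP) (a : ℕ), (∀ j ≤ k, ¬ SatC L t (shift ρ (a + j)) k) →
      ∃ ws, LinExt t (ws.map Witness.label) ∧ IsWitnessSeq L ρ a ws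
  | .node θ cs, a, h => by
    have hθ : ∀ j ≤ k, ¬ SatState L θ (ρ (a + j)) := fun j hj hsat =>
      h j hj (satC_node_iff.2 (.inl (by simpa [shift] using hsat)))
    obtain ⟨m, d, ham, hd, hmd, hρm⟩ := exists_apply_eq_apply_add_of_card_le ρ hk a
    have hcs : ∀ c ∈ cs, ¬ SatFinfC L c (shift ρ m) k := fun c hc hsat =>
      h (m - a) (by omega) (satC_node_iff.2 (.inr ⟨c, hc, by rwa [show a + (m - a) = m by omega]⟩))
    obtain ⟨ws, hlin, hws⟩ := exists_isWitnessSeq_linExtF (a := m) fun c hc => by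
      obtain ⟨i, hi⟩ := not_satFinfC_iff.1 (hcs c hc)
      obtain ⟨ws, hlin, hws⟩ := exists_isWitnessSeq_linExt hρ hk c (m + i) fun j hj => by
        simpa [shift_shift, Nat.add_comm, Nat.add_left_comm] using hi j hj
      exact ⟨ws, hlin, hws.mono (by omega)⟩
    refine ⟨⟨θ, (List.range' m (d + 1)).map ρ, m⟩ :: ws, .node hlin,
      IsWitnessSeq.cons ⟨hρ.isLoop_map_range' hd hρm, ?_, ?_⟩ ham hws⟩
    · simp only [List.mem_map, List.mem_range'_1]
      rintro _ ⟨n, hn, rfl⟩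
      simpa [show a + (n - a) = n by omega] using hθ (n - a) (by omega)
    · show ρ m ∈ (List.range' m (d + 1)).map ρ
      exact List.mem_map_of_mem (List.mem_range'_1.2 ⟨le_rfl, by omega⟩)
termination_by t => sizeOf t
decreasing_by
  have := List.sizeOf_lt_of_mem hc
  simp only [CTree.node.sizeOf_spec]
  omega

theorem IsWitnessSeq.exists_avoidingSeq_realizedBy {ψ : CTree AP} {ws : List (Witness S AP)}
    (hlin : LinExt ψ (ws.map Witness.label)) (hws : IsWitnessSeq L ρ a ws) :
    ∃ U : AvoidingSeq L ψ, RealizedBy U ρ := by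
  obtain ⟨j, hj, hjpos⟩ :=
    exists_monotone_getElem_eq (ps := ws.map Witness.pos) (List.pairwise_map.2 hws.2)
  refine ⟨⟨ws.map Witness.label, ws.map Witness.loop, hlin, by simp, ?_, ?_⟩, j, hj, fun i => ?_⟩
  · simp only [List.mem_map]
    rintro _ ⟨w, hw, rfl⟩
    exact (hws.1 w hw).1.1
  · simp only [List.zip_map', List.mem_map]
    rintro _ ⟨w, hw, rfl⟩
    exact (hws.1 w hw).1.2.1
  · have hi : (i : ℕ) < ws.length := by simpa using i.2
    simpa [hjpos i (by simpa using hi)] using (hws.1 _ (List.getElem_mem hi)).1.2.2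

end Witnesses

section Walks
variable {L : LTS S AP}

/-- `a :: l` is a walk from `a` to `b`; leaving out the start lets walks concatenate by `++`. -/
def IsWalk (L : LTS S AP) (a : S) (l : List S) (b : S) : Prop :=
  (a :: l).IsChain L.T ∧ (a :: l).getLast (List.cons_ne_nil a l) = b

theorem Reachable.exists_isWalk {a b : S} (h : Reachable L a b) : ∃ l, IsWalk L a l b :=
  List.exists_isChain_cons_of_relationReflTransGen h

theorem IsWalk.append {a b c : S} {l₁ l₂ : List S} (h₁ : IsWalk L a l₁ b) (h₂ : IsWalk L b l₂ c) :
    IsWalk L a (l₁ ++ l₂) c := by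
  obtain ⟨hc₁, rfl⟩ := h₁
  obtain ⟨hc₂, rfl⟩ := h₂
  cases l₂ with
  | nil => exact ⟨by simpa using hc₁, by simp⟩
  | cons y l₂ =>
    refine ⟨?_, by rw [List.getLast_cons (by simp), List.getLast_cons (by simp),
      List.getLast_append_of_ne_nil (by simp)]⟩
    rw [← List.cons_append]
    refine hc₁.append hc₂.tail ?_
    simp only [List.getLast?_eq_some_getLast (List.cons_ne_nil a l₁), Option.mem_def,
      Option.some.injEq, List.head?_cons]
    rintro _ rfl _ rfl
    exact List.isChain_cons_cons.1 hc₂ |>.1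

theorem IsWalk.flatten {a : S} {ls : List (List S)} (h : ∀ l ∈ ls, IsWalk L a l a) :
    IsWalk L a ls.flatten a := by
  induction ls with
  | nil => exact ⟨.singleton a, rfl⟩
  | cons l ls ih =>
    exact (h l List.mem_cons_self).append (ih fun l' hl' => h l' (List.mem_cons_of_mem _ hl'))

theorem IsWalk.reachable_of_mem {a b x : S} {l : List S} (h : IsWalk L a l b) (hx : x ∈ a :: l) :
    Reachable L a x ∧ Reachable L x b :=
  ⟨h.1.induction (Reachable L a) _ (fun _ _ hxy hax => hax.tail hxy) (fun _ => .refl) x hx,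
    h.1.backwards_cons_induction (Reachable L · b) _ h.2 (fun _ _ hxy hyb => hyb.head hxy) .refl
      x hx⟩

theorem IsLoop.exists_isWalk {u : List S} (h : IsLoop L u) :
    ∃ x l, u = x :: l ∧ l ≠ [] ∧ IsWalk L x l x := by
  obtain ⟨hlen, hchain, hloop⟩ := h
  match u, hlen with
  | x :: y :: l, _ =>
    exact ⟨x, y :: l, rfl, by simp, hchain,
      by simpa [List.getLast?_eq_some_getLast] using hloop.symm⟩

theorem IsWalk.exists_run {a : S} {l : List S} (h : IsWalk L a l a) (hl : l ≠ []) :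
    ∃ σ, IsRun L σ ∧ ∀ q i (hi : i < l.length), σ (q * l.length + i) = l[i] := by
  have hpos : 0 < l.length := List.length_pos_of_ne_nil hl
  refine ⟨fun n => l[n % l.length]'(Nat.mod_lt _ hpos), fun n => ?_, fun q i hi => ?_⟩
  · have hstep := List.isChain_iff_getElem.1 h.1
    have hn := Nat.mod_lt n hpos
    rcases Nat.lt_or_ge (n % l.length + 1) l.length with hlt | hge
    · have := hstep (n % l.length + 1) (by simp; omega)
      simp only [List.getElem_cons_succ] at this
      simpa [← Nat.mod_add_mod n, Nat.mod_eq_of_lt hlt] using this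
    · -- wrapping around: `l` ends in `a`, and `a → l[0]` is the first step of the walk
      have hlast : l[n % l.length] = a := by
        rw [← h.2, List.getLast_cons hl, List.getLast_eq_getElem]; congr 1; omega
      have := hstep 0 (by simp; omega)
      simp only [List.getElem_cons_zero, List.getElem_cons_succ] at this
      have h0 : (n + 1) % l.length = 0 := by
        rw [← Nat.mod_add_mod, show n % l.length + 1 = l.length by omega, Nat.mod_self]
      simpa [h0, hlast] using this
  · simp only [Nat.mul_comm q, Nat.mul_add_mod, Nat.mod_eq_of_lt hi]

theorem frequently_mem_of_infix {σ : ℕ → S} {l v : List S}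
    (hσ : ∀ q i (hi : i < l.length), σ (q * l.length + i) = l[i]) (hv : v <:+: l) {k : ℕ}
    (hk : k < v.length) : ∃ᶠ a in atTop, ∀ j ≤ k, σ (a + j) ∈ v := by
  obtain ⟨s, t, rfl⟩ := hv
  refine frequently_atTop.2 fun a₀ => ⟨a₀ * (s ++ v ++ t).length + s.length, ?_, fun j hj => ?_⟩
  · have : 0 < (s ++ v ++ t).length := by simp; omega
    nlinarith
  · rw [Nat.add_assoc, hσ a₀ (s.length + j) (by simp; omega)]
    simp only [List.append_assoc, List.getElem_append_right (Nat.le_add_right _ j),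
      Nat.add_sub_cancel_left, List.getElem_append_left (show j < v.length by omega)]
    exact List.getElem_mem _

end Walks

section Backward
variable {L : LTS S AP}

theorem exists_isWalk_infix_replicate {s x : S} {l : List S} (hsx : Reachable L s x)
    (hxs : Reachable L x s) (hl : IsWalk L x l x) (n : ℕ) :
    ∃ w, IsWalk L s w s ∧ (List.replicate n l).flatten <:+: w := by
  obtain ⟨p, hp⟩ := hsx.exists_isWalk
  obtain ⟨q, hq⟩ := hxs.exists_isWalk
  exact ⟨p ++ (List.replicate n l).flatten ++ q,
    (hp.append (IsWalk.flatten fun l' hl' => List.eq_of_mem_replicate hl' ▸ hl)).append hq,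
    List.infix_append _ _ _⟩

theorem exists_isWalk_forall_infix_of_isLoop {s : S} (k : ℕ) {us : List (List S)}
    (h : ∀ u ∈ us, IsLoop L u ∧ ∃ y ∈ u, Reachable L s y ∧ Reachable L y s) :
    ∃ w, IsWalk L s w s ∧ ∀ u ∈ us, ∃ v, v <:+: w ∧ k < v.length ∧ ∀ x ∈ v, x ∈ u := by
  induction us with
  | nil => exact ⟨[], ⟨.singleton s, rfl⟩, by simp⟩
  | cons u us ih =>
    obtain ⟨w', hw', hinf'⟩ := ih fun u' hu' => h u' (List.mem_cons_of_mem _ hu')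
    obtain ⟨hu, y, hyu, hsy, hys⟩ := h u List.mem_cons_self
    obtain ⟨x, l, rfl, hl, hxl⟩ := hu.exists_isWalk
    obtain ⟨hxy, hyx⟩ := hxl.reachable_of_mem hyu
    obtain ⟨w, hw, hinf⟩ :=
      exists_isWalk_infix_replicate (hsy.trans hyx) (hxy.trans hys) hxl (k + 1)
    refine ⟨w ++ w', hw.append hw', ?_⟩
    rintro u' (_ | ⟨_, hu'⟩)
    · refine ⟨_, hinf.trans (List.prefix_append _ _).isInfix, ?_, ?_⟩
      · have := List.length_pos_of_ne_nil hl
        simp only [List.length_flatten, List.map_replicate, List.sum_replicate, smul_eq_mul]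
        nlinarith
      · intro z hz
        simp only [List.mem_flatten, List.mem_replicate] at hz
        obtain ⟨_, ⟨-, rfl⟩, hz⟩ := hz
        exact List.mem_cons_of_mem _ hz
    · obtain ⟨v, hv, hkv, hvu⟩ := hinf' u' hu'
      exact ⟨v, hv.trans (List.suffix_append _ _).isInfix, hkv, hvu⟩

theorem AvoidingSeq.exists_run_frequently_not_satState {ψ : CTree AP} {ρ : ℕ → S} {s : S}
    (U : AvoidingSeq L ψ) (hU : RealizedBy U ρ)
    (hρ : ∀ n, Reachable L s (ρ n) ∧ Reachable L (ρ n) s) (k : ℕ) :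
    ∃ σ, IsRun L σ ∧ ∀ θ ∈ U.labels, ∃ᶠ a in atTop, ∀ j ≤ k, ¬ SatState L θ (σ (a + j)) := by
  obtain ⟨j, -, hj⟩ := hU
  have hloops : ∀ u ∈ U.loops, IsLoop L u ∧ ∃ y ∈ u, Reachable L s y ∧ Reachable L y s := by
    intro u hu
    obtain ⟨i, rfl⟩ := List.get_of_mem hu
    exact ⟨U.isLoop _ hu, _, hj i, hρ _⟩
  obtain ⟨w, hw, hinf⟩ := exists_isWalk_forall_infix_of_isLoop k hloops
  have hw₀ : w ≠ [] := by
    have : U.loops ≠ [] := List.ne_nil_of_length_pos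
      (U.length_eq ▸ List.length_pos_of_ne_nil U.linext.ne_nil)
    obtain ⟨v, hv, hkv, -⟩ := hinf _ (List.head_mem this)
    exact List.ne_nil_of_length_pos (by have := hv.length_le; omega)
  obtain ⟨σ, hσ, hσw⟩ := hw.exists_run hw₀
  refine ⟨σ, hσ, fun θ hθ => ?_⟩
  obtain ⟨u, hu⟩ := exists_mem_zip_of_mem_right U.length_eq hθ
  obtain ⟨v, hv, hkv, hvu⟩ := hinf u (List.of_mem_zip hu).1
  exact (frequently_mem_of_infix hσw hv hkv).mono fun a ha j hj =>
    U.avoid _ hu _ (hvu _ (ha j hj))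

theorem LinExt.exists_linExtF {θ : StateFormula AP} {cs : List (CTree AP)}
    {l : List (StateFormula AP)} (h : LinExt (.node θ cs) l) :
    ∃ l', l = θ :: l' ∧ LinExtF cs l' := by
  cases h; exact ⟨_, rfl, ‹_›⟩

theorem frequently_not_satC_of_linExt {σ : ℕ → S} {k : ℕ} :
    ∀ (t : CTree AP) {l : List (StateFormula AP)}, LinExt t l →
      (∀ θ ∈ l, ∃ᶠ a in atTop, ∀ j ≤ k, ¬ SatState L θ (σ (a + j))) →
      ∃ᶠ a in atTop, ∀ j ≤ k, ¬ SatC L t (shift σ (a + j)) k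
  | .node θ cs, _, .node hlin, h => by
    have hcs : ∀ c ∈ cs, ∀ i, ¬ SatFinfC L c (shift σ i) k := fun c hc => by
      obtain ⟨lc, hlc, hsub⟩ := hlin.exists_linExt_subset hc
      exact not_satFinfC_shift_of_frequently (frequently_not_satC_of_linExt c hlc
        fun θ' hθ' => h θ' (List.mem_cons_of_mem _ (hsub hθ')))
    refine (h θ List.mem_cons_self).mono fun a ha j hj hsat => ?_
    rcases satC_node_iff.1 hsat with hθ | ⟨c, hc, hc'⟩
    · exact ha j hj (by simpa [shift] using hθ)
    · exact hcs c hc _ hc'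
termination_by t => sizeOf t
decreasing_by
  have := List.sizeOf_lt_of_mem hc
  simp only [CTree.node.sizeOf_spec]
  omega

theorem AvoidingSeq.exists_run_forall_not_satC {cs : List (CTree AP)} {ρ : ℕ → S} {s : S}
    (U : AvoidingSeq L (.node [] cs)) (hU : RealizedBy U ρ)
    (hρ : ∀ n, Reachable L s (ρ n) ∧ Reachable L (ρ n) s) (k : ℕ) :
    ∃ σ, IsRun L σ ∧ ∀ i, ¬ SatC L (.node [] cs) (shift σ i) k := by
  obtain ⟨σ, hσ, hfreq⟩ := U.exists_run_frequently_not_satState hU hρ k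
  obtain ⟨l, hl, hlin⟩ := U.linext.exists_linExtF
  refine ⟨σ, hσ, fun i hi => ?_⟩
  rcases satC_node_iff.1 hi with h | ⟨c, hc, hc'⟩
  · exact satState_nil _ h
  · obtain ⟨lc, hlc, hsub⟩ := hlin.exists_linExt_subset hc
    refine not_satFinfC_shift_of_frequently (frequently_not_satC_of_linExt c hlc
      fun θ hθ => hfreq θ ?_) i hc'
    rw [hl]
    exact List.mem_cons_of_mem _ (hsub hθ)

end Backward

theorem exists_scc_realizedBy_of_forall_not_satC [Fintype S] {L : LTS S AP} {k : ℕ}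
    (hk : Fintype.card S ≤ k) {t : CTree AP} {σ : ℕ → S} (hσ : IsRun L σ)
    (h : ∀ i, ¬ SatC L t (shift σ i) k) :
    ∃ C, IsSCC L C ∧ ∃ U : AvoidingSeq L t, ∃ ρ, IsRun L ρ ∧ (∀ n, ρ n ∈ C) ∧ RealizedBy U ρ := by
  obtain ⟨N, hN⟩ := hσ.exists_tail_mutually_reachable
  obtain ⟨ws, hlin, hws⟩ := exists_isWitnessSeq_linExt (hσ.shift N) hk t 0 fun j _ => by
    simpa [shift_shift] using h (j + N)
  obtain ⟨U, hU⟩ := hws.exists_avoidingSeq_realizedBy hlin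
  exact ⟨_, ⟨σ N, rfl⟩, U, _, hσ.shift N, hN, hU⟩

/-- **SCC characterization for initialized formulas.** For `ψ` a
conjunction-free canonical formula of `L⁺(F_p^∞)` (root labeled `false`) and
`k ≥ |S| + 1`: there is a run `ρ` of `L` with `(ρ,k) ⊭ F ψ` iff there are an SCC `C`
of `L` and a `ψ`-avoiding sequence realized by a run all of whose states lie in `C`. -/
theorem scc_characterization [Fintype S] (L : LTS S AP) (cs : List (CTree AP)) (k : ℕ)
    (hk : Fintype.card S + 1 ≤ k) :
    (∃ ρ : ℕ → S, IsRun L ρ ∧ ¬ ∃ i : ℕ, SatC L (.node [] cs) (shift ρ i) k) ↔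
    (∃ C : Set S, IsSCC L C ∧
      ∃ U : AvoidingSeq L (CTree.node [] cs), ∃ ρ : ℕ → S,
        IsRun L ρ ∧ (∀ n : ℕ, ρ n ∈ C) ∧ RealizedBy U ρ) := by
  constructor
  · rintro ⟨σ, hσ, hneg⟩
    exact exists_scc_realizedBy_of_forall_not_satC (by omega) hσ (not_exists.1 hneg)
  · rintro ⟨C, ⟨s, rfl⟩, U, ρ, -, hρC, hU⟩
    obtain ⟨σ, hσ, h⟩ := U.exists_run_forall_not_satC hU hρC k
    exact ⟨σ, hσ, fun ⟨i, hi⟩ => h i hi⟩
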